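/- arXiv:1910.12139 — 2 statements merged into one kernel-verified Lean document; each statement's English description precedes it below -/
import Mathlib

section
/- Let G be a finite simple graph on n vertices with at least one edge, and let Δ be its maximum vertex degree. Then EE(G) > e^{√Δ} + (n − 1) − √Δ. -/
open Finset Real

namespace EstradaIndexPaper

/-- The adjacency matrix of a simple graph over `ℝ` is Hermitian. -/
theorem adjMatrix_isHermitian {n : ℕ} (G : SimpleGraph (Fin n)) [DecidableRel G.Adj] :
    (G.adjMatrix ℝ).IsHermitian := by
  unfold Matrix.IsHermitian
  rw [Matrix.conjTranspose_eq_transpose_of_trivial]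
  exact G.isSymm_adjMatrix

/-- The eigenvalues of the adjacency matrix of `G`. -/
noncomputable def eig {n : ℕ} (G : SimpleGraph (Fin n)) [DecidableRel G.Adj] : Fin n → ℝ :=
  (adjMatrix_isHermitian G).eigenvalues

/-- The Estrada index of `G`: the sum of `e^{λ_i}` over the adjacency eigenvalues. -/
noncomputable def EE {n : ℕ} (G : SimpleGraph (Fin n)) [DecidableRel G.Adj] : ℝ :=
  ∑ i, Real.exp (eig G i)

/-- The largest adjacency eigenvalue `λ₁` of `G`. -/
noncomputable def lam1 {n : ℕ} (G : SimpleGraph (Fin n)) [DecidableRel G.Adj] : ℝ :=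
  ⨆ i, eig G i

/-- The Randić index `R(G) = Σ_{ij ∈ E(G)} (d(i)d(j))^{-1/2}`. -/
noncomputable def randic {n : ℕ} (G : SimpleGraph (Fin n)) [DecidableRel G.Adj] : ℝ :=
  ∑ e ∈ G.edgeFinset,
    Sym2.lift ⟨fun i j => (Real.sqrt ((G.degree i : ℝ) * (G.degree j : ℝ)))⁻¹,
      fun i j => by simp [mul_comm]⟩ e

/-- The general Randić index `R_{1/2}(G) = Σ_{ij ∈ E(G)} (d(i)d(j))^{1/2}`. -/
noncomputable def randicHalf {n : ℕ} (G : SimpleGraph (Fin n)) [DecidableRel G.Adj] : ℝ :=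
  ∑ e ∈ G.edgeFinset,
    Sym2.lift ⟨fun i j => Real.sqrt ((G.degree i : ℝ) * (G.degree j : ℝ)),
      fun i j => by simp [mul_comm]⟩ e

end EstradaIndexPaper

/-! By `tr A = 0` the eigenvalues other than `λ₁` sum to `-λ₁`, so `e^x ≥ 1 + x` (strict at one of
them, which is negative) gives `EE(G) > e^{λ₁} + (n - 1) - λ₁`. Since `x ↦ e^x - x` is increasing on
`[0, ∞)`, it remains to see `λ₁ ≥ √Δ`: evaluate the Rayleigh quotient of `A` at `√Δ 𝟙_v + 𝟙_{N(v)}`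
for a vertex `v` of maximum degree. -/

open Matrix

theorem Matrix.IsHermitian.dotProduct_mulVec_le {ι : Type*} [Fintype ι] [DecidableEq ι]
    {A : Matrix ι ι ℝ} (hA : A.IsHermitian) {c : ℝ} (hc : ∀ i, hA.eigenvalues i ≤ c)
    (x : ι → ℝ) : x ⬝ᵥ A *ᵥ x ≤ c * (x ⬝ᵥ x) := by
  let U : Matrix ι ι ℝ := hA.eigenvectorUnitary
  have hdecomp : c • 1 - A = U * diagonal (fun i => c - hA.eigenvalues i) * Uᴴ := by
    have hc1 : c • (1 : Matrix ι ι ℝ) = U * (c • 1) * Uᴴ := by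
      rw [Matrix.mul_smul, Matrix.mul_one, Matrix.smul_mul, ← star_eq_conjTranspose,
        Unitary.mul_star_self_of_mem hA.eigenvectorUnitary.2]
    conv_lhs => rw [hA.spectral_theorem, Unitary.conjStarAlgAut_apply, hc1]
    rw [← star_eq_conjTranspose, ← Matrix.sub_mul, ← Matrix.mul_sub]
    congr 2
    ext i j
    by_cases h : i = j <;> simp [h]
  have hpsd : (c • 1 - A).PosSemidef := by
    rw [hdecomp]
    exact (posSemidef_diagonal_iff.mpr fun i => sub_nonneg.mpr (hc i)).mul_mul_conjTranspose_same U
  simpa [sub_mulVec, dotProduct_sub, smul_mulVec, sub_nonneg] using hpsd.dotProduct_mulVec_nonneg x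

namespace SimpleGraph

variable {V : Type*} [Fintype V] (G : SimpleGraph V) [DecidableRel G.Adj]

theorem dotProduct_adjMatrix_mulVec_nonneg {x : V → ℝ} (hx : 0 ≤ x) :
    0 ≤ x ⬝ᵥ G.adjMatrix ℝ *ᵥ x :=
  Finset.sum_nonneg fun u _ => mul_nonneg (hx u) <| by
    rw [adjMatrix_mulVec_apply]
    exact Finset.sum_nonneg fun w _ => hx w

theorem sqrt_degree_le_of_forall_dotProduct_adjMatrix_mulVec_le [DecidableEq V] {c : ℝ}
    (hc : ∀ x : V → ℝ, x ⬝ᵥ G.adjMatrix ℝ *ᵥ x ≤ c * (x ⬝ᵥ x)) {v : V}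
    (hv : 0 < G.degree v) :
    √(G.degree v) ≤ c := by
  set d : ℝ := (G.degree v : ℝ)
  set s := √d
  set e : V → ℝ := Pi.single v 1
  -- `y` is the indicator of the neighbourhood of `v`; the test vector is `s • e + y`.
  set y := G.adjMatrix ℝ *ᵥ e with hy
  have hy_nonneg : 0 ≤ y := fun u => by
    simp only [y, e, mulVec_single_one, col_apply, adjMatrix_apply]
    positivity
  have he_y : e ⬝ᵥ y = 0 := by simp [e, y]
  have he_Ay : e ⬝ᵥ G.adjMatrix ℝ *ᵥ y = d := by
    rw [hy, mulVec_mulVec, single_one_dotProduct, mulVec_single_one, col_apply,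
      adjMatrix_mul_self_apply_self]
  have hy_y : y ⬝ᵥ y = d := by
    rw [← he_Ay, dotProduct_mulVec, ← mulVec_transpose, transpose_adjMatrix, dotProduct_comm]
  have hform : (s • e + y) ⬝ᵥ G.adjMatrix ℝ *ᵥ (s • e + y) =
      2 * s * d + y ⬝ᵥ G.adjMatrix ℝ *ᵥ y := by
    simp only [mulVec_add, mulVec_smul, ← hy, add_dotProduct, dotProduct_add, smul_dotProduct,
      dotProduct_smul, he_y, he_Ay, hy_y, smul_eq_mul]
    ring
  have hnorm : (s • e + y) ⬝ᵥ (s • e + y) = 2 * d := by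
    simp only [add_dotProduct, dotProduct_add, smul_dotProduct, dotProduct_smul, he_y,
      dotProduct_comm y e, hy_y, smul_eq_mul, e, single_one_dotProduct, Pi.single_eq_same]
    rw [← Real.mul_self_sqrt (by positivity : 0 ≤ d)]
    ring
  have hd : 0 < d := by simpa [d] using hv
  have hrayleigh := hc (s • e + y)
  rw [hform, hnorm] at hrayleigh
  nlinarith [G.dotProduct_adjMatrix_mulVec_nonneg hy_nonneg, Real.mul_self_sqrt hd.le]

end SimpleGraph

theorem exp_add_card_sub_one_sub_lt_sum_exp {ι : Type*} [Fintype ι] {μ : ι → ℝ}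
    (hμ : ∑ i, μ i = 0) {i₀ : ι} (hpos : 0 < μ i₀) :
    exp (μ i₀) + (Fintype.card ι - 1) - μ i₀ < ∑ i, exp (μ i) := by
  classical
  have hrest : ∑ i ∈ univ.erase i₀, μ i = -μ i₀ := by
    rw [← add_sum_erase _ _ (mem_univ i₀)] at hμ
    linarith
  obtain ⟨j, hj, hμj⟩ : ∃ j ∈ univ.erase i₀, μ j < 0 :=
    exists_lt_of_sum_lt (by simpa [hrest] using hpos)
  have hlin : ∑ i ∈ univ.erase i₀, (1 + μ i) < ∑ i ∈ univ.erase i₀, exp (μ i) :=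
    sum_lt_sum (fun i _ => by linarith [add_one_le_exp (μ i)])
      ⟨j, hj, by linarith [add_one_lt_exp hμj.ne]⟩
  have hcard : ((univ.erase i₀).card : ℝ) = Fintype.card ι - 1 := by
    rw [card_erase_of_mem (mem_univ i₀), card_univ,
      Nat.cast_sub (Fintype.card_pos_iff.mpr ⟨i₀⟩), Nat.cast_one]
  rw [sum_add_distrib, hrest, sum_const, nsmul_one, hcard] at hlin
  rw [← add_sum_erase _ _ (mem_univ i₀)]
  linarith

theorem exp_sub_self_le_exp_sub_self {a b : ℝ} (ha : 0 ≤ a) (hab : a ≤ b) :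
    exp a - a ≤ exp b - b := by
  have hexp : exp b = exp a * exp (b - a) := by rw [← exp_add, add_sub_cancel]
  nlinarith [add_one_le_exp (b - a), one_le_exp ha]

namespace EstradaIndexPaper

theorem sum_eig_eq_zero {n : ℕ} (G : SimpleGraph (Fin n)) [DecidableRel G.Adj] :
    ∑ i, eig G i = 0 := by
  have htrace := (adjMatrix_isHermitian G).trace_eq_sum_eigenvalues
  rw [G.trace_adjMatrix ℝ] at htrace
  simpa [eig] using htrace.symm

theorem stmt2 {n : ℕ} (G : SimpleGraph (Fin n)) [DecidableRel G.Adj]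
    (hG : G.edgeFinset.Nonempty) :
    EE G > Real.exp (Real.sqrt (G.maxDegree)) + ((n : ℝ) - 1) - Real.sqrt (G.maxDegree) := by
  obtain ⟨a, b, hab⟩ :=
    SimpleGraph.ne_bot_iff_exists_adj.mp (SimpleGraph.edgeFinset_nonempty.mp hG)
  have : Nonempty (Fin n) := ⟨a⟩
  obtain ⟨v, hv⟩ := G.exists_maximal_degree_vertex
  have hdeg : 0 < G.degree v :=
    hv ▸ ((G.degree_pos_iff_exists_adj a).mpr ⟨b, hab⟩).trans_le (G.degree_le_maxDegree a)
  obtain ⟨i₀, -, hmax⟩ := exists_max_image univ (eig G) univ_nonempty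
  have hsqrt : √(G.maxDegree : ℝ) ≤ eig G i₀ :=
    hv ▸ G.sqrt_degree_le_of_forall_dotProduct_adjMatrix_mulVec_le
      ((adjMatrix_isHermitian G).dotProduct_mulVec_le fun i => hmax i (mem_univ i)) hdeg
  have hsqrt_pos : 0 < √(G.maxDegree : ℝ) :=
    Real.sqrt_pos.mpr (by rw [hv]; exact_mod_cast hdeg)
  calc exp √(G.maxDegree : ℝ) + ((n : ℝ) - 1) - √(G.maxDegree : ℝ)
      ≤ exp (eig G i₀) + ((n : ℝ) - 1) - eig G i₀ := by
        linarith [exp_sub_self_le_exp_sub_self hsqrt_pos.le hsqrt]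
    _ < EE G := by
        simpa [EE] using exp_add_card_sub_one_sub_lt_sum_exp (sum_eig_eq_zero G)
          (hsqrt_pos.trans_le hsqrt)

end EstradaIndexPaper
end

section
/- Let G be a connected finite simple graph on n ≥ 2 vertices. Then EE(G) > e^{2cos(π/(n+1))} + (n − 1) − 2cos(π/(n+1)). -/
/-!
Since `exp x ≥ 1 + x + x²/2 + x³/6` for every real `x`, summing over the adjacency spectrum gives
`EE(G) ≥ n + tr A + tr A²/2 + tr A³/6 ≥ n + m`: here `tr A = 0`, `tr A² = 2m`, and `tr A³ ≥ 0`
counts closed walks. A connected graph has `m ≥ n - 1`, so `EE(G) ≥ 2n - 1`, and it remains to see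
`exp c - c < n` for `c = 2 cos (π / (n + 1))`. As `x ↦ exp x - x` increases on `[0, ∞)`, it is
enough to bound `c` by its exact value for `n ≤ 5` and by `2` for `n ≥ 6`, and then `exp` by a
Taylor polynomial.
-/

open Finset Real

namespace EstradaIndexPaper

theorem _root_.Matrix.IsHermitian.trace_pow_eq_sum_eigenvalues_pow {𝕜 ι : Type*} [RCLike 𝕜]
    [Fintype ι] [DecidableEq ι] {A : Matrix ι ι 𝕜} (hA : A.IsHermitian) (k : ℕ) :
    (A ^ k).trace = ∑ i, (hA.eigenvalues i : 𝕜) ^ k := by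
  conv_lhs => rw [hA.spectral_theorem, ← map_pow, Unitary.conjStarAlgAut_apply,
    Matrix.trace_mul_cycle, Unitary.coe_star_mul_self, one_mul, Matrix.diagonal_pow,
    Matrix.trace_diagonal]
  simp

-- `(1 + x + x²/2) (1 - x + x²/2) = 1 + x⁴/4 ≥ 1`, and the second factor is at most `exp (-x)`.
lemma exp_le_quadratic_of_nonpos {x : ℝ} (hx : x ≤ 0) : exp x ≤ 1 + x + x ^ 2 / 2 := by
  have hneg : 1 + -x + (-x) ^ 2 / 2 ≤ exp (-x) := quadratic_le_exp_of_nonneg (by linarith)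
  have hprod : exp x * exp (-x) = 1 := by rw [← exp_add, add_neg_cancel, exp_zero]
  nlinarith [exp_pos x, sq_nonneg (x ^ 2)]

lemma cubic_le_exp (x : ℝ) : 1 + x + x ^ 2 / 2 + x ^ 3 / 6 ≤ exp x := by
  rcases le_total 0 x with hx | hx
  · simpa [sum_range_succ, Nat.factorial] using sum_le_exp_of_nonneg hx 4
  set g : ℝ → ℝ := fun y => exp y - (1 + y + y ^ 2 / 2 + y ^ 3 / 6)
  have hg : ∀ y, HasDerivAt g (exp y - (1 + y + y ^ 2 / 2)) y := fun y => by
    refine ((hasDerivAt_exp y).sub ((((hasDerivAt_id y).const_add 1).add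
      ((hasDerivAt_pow 2 y).div_const 2)).add ((hasDerivAt_pow 3 y).div_const 6))).congr_deriv ?_
    norm_num
    ring
  have hanti : AntitoneOn g (Set.Iic 0) :=
    antitoneOn_of_hasDerivWithinAt_nonpos (convex_Iic 0)
      (fun y _ => (hg y).continuousAt.continuousWithinAt)
      (fun y _ => (hg y).hasDerivWithinAt)
      (fun y hy => by
        rw [interior_Iic] at hy
        linarith [exp_le_quadratic_of_nonpos (le_of_lt hy)])
  have := hanti hx Set.self_mem_Iic hx
  simp only [g, exp_zero] at this
  linarith

lemma exp_sub_self_le_exp_sub_self {x y : ℝ} (hx : 0 ≤ x) (hxy : x ≤ y) :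
    exp x - x ≤ exp y - y := by
  have hsplit : exp y = exp x * exp (y - x) := by rw [← exp_add, add_sub_cancel]
  nlinarith [add_one_le_exp (y - x), one_le_exp hx]

-- `exp_one_lt_d9` times the five-term bound `exp_bound'` on `exp y`.
lemma exp_one_add_le {y : ℝ} (h0 : 0 ≤ y) (h1 : y ≤ 1) :
    exp (1 + y) ≤ 2.7182818286 * (1 + y + y ^ 2 / 2 + y ^ 3 / 6 + y ^ 4 / 24 + y ^ 5 / 100) := by
  have hy := exp_bound' h0 h1 (show 0 < 5 by norm_num)
  norm_num [sum_range_succ, Nat.factorial] at hy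
  rw [exp_add]
  exact mul_le_mul exp_one_lt_d9.le (by linarith) (exp_pos y).le (by norm_num)

lemma cos_pi_div_succ_nonneg {n : ℕ} (hn : 1 ≤ n) : 0 ≤ cos (π / (n + 1)) := by
  have hle : π / (n + 1) ≤ π / 2 := by
    gcongr
    exact_mod_cast Nat.succ_le_succ hn
  have hnonneg : 0 ≤ π / (n + 1) := by positivity
  exact cos_nonneg_of_neg_pi_div_two_le_of_le (by linarith [pi_pos]) hle

lemma exp_two_cos_sub_two_cos_lt {n : ℕ} (hn : 2 ≤ n) :
    exp (2 * cos (π / (n + 1))) - 2 * cos (π / (n + 1)) < n := by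
  suffices ∃ y : ℝ, 0 ≤ y ∧ y ≤ 1 ∧ 2 * cos (π / (n + 1)) ≤ 1 + y ∧
      2.7182818286 * (1 + y + y ^ 2 / 2 + y ^ 3 / 6 + y ^ 4 / 24 + y ^ 5 / 100) - (1 + y) < n by
    obtain ⟨y, hy0, hy1, hcos, hy⟩ := this
    calc exp (2 * cos (π / (n + 1))) - 2 * cos (π / (n + 1))
        ≤ exp (1 + y) - (1 + y) := exp_sub_self_le_exp_sub_self
          (by linarith [cos_pi_div_succ_nonneg (n := n) (by omega)]) hcos
      _ < n := by linarith [exp_one_add_le hy0 hy1]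
  rcases lt_or_ge n 6 with h6 | h6
  · interval_cases n
    · refine ⟨0, by norm_num, by norm_num, ?_, by norm_num⟩
      norm_num [cos_pi_div_three]
    · refine ⟨1 / 2, by norm_num, by norm_num, ?_, by norm_num⟩
      have hsqrt : √2 ≤ 3 / 2 := sqrt_le_iff.mpr ⟨by norm_num, by norm_num⟩
      norm_num [cos_pi_div_four]
      linarith
    · refine ⟨7 / 10, by norm_num, by norm_num, ?_, by norm_num⟩
      have hsqrt : √5 ≤ 12 / 5 := sqrt_le_iff.mpr ⟨by norm_num, by norm_num⟩
      norm_num [cos_pi_div_five]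
      linarith
    · refine ⟨3 / 4, by norm_num, by norm_num, ?_, by norm_num⟩
      have hsqrt : √3 ≤ 7 / 4 := sqrt_le_iff.mpr ⟨by norm_num, by norm_num⟩
      norm_num [cos_pi_div_six]
      linarith
  · refine ⟨1, by norm_num, le_rfl, by linarith [cos_le_one (π / (n + 1))], ?_⟩
    have : (6 : ℝ) ≤ n := by exact_mod_cast h6
    norm_num
    linarith

section Spectrum

variable {n : ℕ} (G : SimpleGraph (Fin n)) [DecidableRel G.Adj]

lemma sum_eig_pow (k : ℕ) : ∑ i, eig G i ^ k = (G.adjMatrix ℝ ^ k).trace := by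
  simpa [eig] using ((adjMatrix_isHermitian G).trace_pow_eq_sum_eigenvalues_pow k).symm

lemma sum_eig : ∑ i, eig G i = 0 := by
  simpa using sum_eig_pow G 1

lemma sum_eig_sq : ∑ i, eig G i ^ 2 = 2 * #G.edgeFinset := by
  rw [sum_eig_pow, sq, Matrix.trace]
  simp only [Matrix.diag, SimpleGraph.adjMatrix_mul_self_apply_self]
  exact_mod_cast G.sum_degrees_eq_twice_card_edges

-- The diagonal entries of `A ^ 3` count closed walks of length three.
lemma sum_eig_cube_nonneg : 0 ≤ ∑ i, eig G i ^ 3 := by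
  rw [sum_eig_pow, Matrix.trace]
  exact sum_nonneg fun i _ => by
    rw [Matrix.diag, SimpleGraph.adjMatrix_pow_apply_eq_card_walk]
    positivity

lemma card_add_card_edgeFinset_le_EE : (n : ℝ) + #G.edgeFinset ≤ EE G :=
  calc (n : ℝ) + #G.edgeFinset
      ≤ ∑ _i : Fin n, (1 : ℝ) + ∑ i, eig G i + (∑ i, eig G i ^ 2) / 2
          + (∑ i, eig G i ^ 3) / 6 := by
        rw [sum_eig, sum_eig_sq]
        simp only [sum_const, card_univ, Fintype.card_fin, nsmul_eq_mul, mul_one]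
        linarith [sum_eig_cube_nonneg G]
    _ = ∑ i, (1 + eig G i + eig G i ^ 2 / 2 + eig G i ^ 3 / 6) := by
        simp only [sum_add_distrib, sum_div]
    _ ≤ EE G := sum_le_sum fun i _ => cubic_le_exp (eig G i)

end Spectrum

theorem stmt7 {n : ℕ} (hn : 2 ≤ n) (G : SimpleGraph (Fin n)) [DecidableRel G.Adj]
    (hG : G.Connected) :
    EE G > Real.exp (2 * Real.cos (Real.pi / (n + 1))) + ((n : ℝ) - 1) -
      2 * Real.cos (Real.pi / (n + 1)) := by
  have hedges : (n : ℝ) ≤ #G.edgeFinset + 1 := by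
    have := hG.card_vert_le_card_edgeSet_add_one
    rw [Nat.card_eq_fintype_card, Fintype.card_fin, Nat.card_eq_fintype_card,
      ← SimpleGraph.edgeFinset_card] at this
    exact_mod_cast this
  linarith [card_add_card_edgeFinset_le_EE G, exp_two_cos_sub_two_cos_lt hn]

end EstradaIndexPaper
end
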